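/- Let C₁,…,C_M be 4×4 real symmetric matrices and T₁,…,T_M homogeneous pose matrices T_j = [[R_j, t_j],[0, 1]] with R_jᵀR_j = I and det R_j = 1, such that the (4,4)-entry of S := Σⱼ T_j C_j T_jᵀ is positive. Then for any homogeneous pose matrix T₀ = [[R₀, t₀],[0, 1]] with R₀ᵀR₀ = I and det R₀ = 1, and each l ∈ {1,2,3}: λ_l(A(Σⱼ (T₀T_j) C_j (T₀T_j)ᵀ)) = λ_l(A(Σⱼ T_j C_j T_jᵀ)). In other words, the bundle adjustment cost is invariant to left-multiplying all poses by a common rigid transform (gauge freedom). -/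

import Mathlib

open Matrix

noncomputable section

/-- Homogeneous coordinates of a point in `ℝ³`. -/
def homog (x : Fin 3 → ℝ) : Fin 4 → ℝ := Fin.snoc x 1

/-- The point cluster coordinate `ℜ(p) = Σₖ (pₖ,1)(pₖ,1)ᵀ` of a finite family of points. -/
def cluster {n : ℕ} (p : Fin n → Fin 3 → ℝ) : Matrix (Fin 4) (Fin 4) ℝ :=
  ∑ k, vecMulVec (homog (p k)) (homog (p k))

/-- The homogeneous pose matrix `T = [[R, t],[0, 1]]`. -/
def pose (R : Matrix (Fin 3) (Fin 3) ℝ) (t : Fin 3 → ℝ) : Matrix (Fin 4) (Fin 4) ℝ :=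
  Matrix.reindex finSumFinEquiv finSumFinEquiv
    (Matrix.fromBlocks R (Matrix.of fun i (_ : Fin 1) => t i)
      (0 : Matrix (Fin 1) (Fin 3) ℝ) (1 : Matrix (Fin 1) (Fin 1) ℝ))

/-- The upper-left `3×3` block `P` of a `4×4` matrix. -/
def Pblk (C : Matrix (Fin 4) (Fin 4) ℝ) : Matrix (Fin 3) (Fin 3) ℝ :=
  Matrix.of fun i j => C i.castSucc j.castSucc

/-- The upper-right `3×1` block `v` of a `4×4` matrix. -/
def vblk (C : Matrix (Fin 4) (Fin 4) ℝ) : Fin 3 → ℝ :=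
  fun i => C i.castSucc (Fin.last 3)

/-- The `(4,4)` entry `N` of a `4×4` matrix. -/
def Nent (C : Matrix (Fin 4) (Fin 4) ℝ) : ℝ := C (Fin.last 3) (Fin.last 3)

/-- `A(C) = (1/N) P − (1/N²) v vᵀ`. -/
def Amat (C : Matrix (Fin 4) (Fin 4) ℝ) : Matrix (Fin 3) (Fin 3) ℝ :=
  (1 / Nent C) • Pblk C - (1 / (Nent C) ^ 2) • vecMulVec (vblk C) (vblk C)

/-- The `l`-th largest eigenvalue (`l = 0` being the largest) of a real symmetric
`3×3` matrix. -/
def eigDesc {A : Matrix (Fin 3) (Fin 3) ℝ} (hA : A.IsHermitian) (l : Fin 3) : ℝ :=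
  (hA.eigenvalues ∘ Tuple.sort hA.eigenvalues) l.rev

/-! Left-multiplying every pose by `T₀ = [[R₀, t₀], [0, 1]]` replaces `S = Σⱼ Tⱼ Cⱼ Tⱼᵀ` by
`T₀ S T₀ᵀ`. For symmetric `S = [[P, v], [vᵀ, N]]` this has blocks
`P' = R₀ P R₀ᵀ + u t₀ᵀ + t₀ uᵀ + N t₀ t₀ᵀ`, `v' = u + N t₀`, `N' = N` with `u = R₀ v`, and the
translation terms cancel in `P'/N' − v' v'ᵀ/N'²`, leaving `A(T₀ S T₀ᵀ) = R₀ A(S) R₀ᵀ`.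
An orthogonal similarity preserves the characteristic polynomial, hence the eigenvalues. -/

section Pose

variable (R : Matrix (Fin 3) (Fin 3) ℝ) (t : Fin 3 → ℝ)

lemma pose_castSucc_castSucc (i j : Fin 3) : pose R t i.castSucc j.castSucc = R i j := by
  simp [pose, finSumFinEquiv_symm_apply_castSucc]

lemma pose_castSucc_last (i : Fin 3) : pose R t i.castSucc (Fin.last 3) = t i := by
  rw [pose, reindex_apply, submatrix_apply, finSumFinEquiv_symm_last]
  simp [finSumFinEquiv_symm_apply_castSucc]

lemma pose_last_castSucc (j : Fin 3) : pose R t (Fin.last 3) j.castSucc = 0 := by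
  rw [pose, reindex_apply, submatrix_apply, finSumFinEquiv_symm_last]
  simp [finSumFinEquiv_symm_apply_castSucc]

lemma pose_last_last : pose R t (Fin.last 3) (Fin.last 3) = 1 := by
  rw [pose, reindex_apply, submatrix_apply, finSumFinEquiv_symm_last]
  simp

variable (S : Matrix (Fin 4) (Fin 4) ℝ)

lemma Nent_pose_mul_mul_transpose : Nent (pose R t * S * (pose R t)ᵀ) = Nent S := by
  simp only [Nent, mul_apply, transpose_apply, Fin.sum_univ_castSucc, pose_last_castSucc,
    pose_last_last]
  ring

lemma vblk_pose_mul_mul_transpose :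
    vblk (pose R t * S * (pose R t)ᵀ) = R *ᵥ vblk S + Nent S • t := by
  ext i
  simp only [vblk, Nent, mul_apply, transpose_apply, Fin.sum_univ_castSucc, pose_last_castSucc,
    pose_last_last, pose_castSucc_castSucc, pose_castSucc_last, Pi.add_apply, Pi.smul_apply,
    mulVec, dotProduct, smul_eq_mul]
  ring

lemma Pblk_pose_mul_mul_transpose (hS : S.IsSymm) :
    Pblk (pose R t * S * (pose R t)ᵀ) = R * Pblk S * Rᵀ + vecMulVec (R *ᵥ vblk S) t
      + vecMulVec t (R *ᵥ vblk S) + Nent S • vecMulVec t t := by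
  ext i j
  simp only [Pblk, vblk, Nent, mul_apply, transpose_apply, Fin.sum_univ_castSucc,
    pose_castSucc_castSucc, pose_castSucc_last, of_apply, Matrix.add_apply, Matrix.smul_apply,
    vecMulVec_apply, mulVec, dotProduct, smul_eq_mul, hS.apply (Fin.last 3)]
  ring

end Pose

lemma Amat_pose_mul_mul_transpose (R : Matrix (Fin 3) (Fin 3) ℝ) (t : Fin 3 → ℝ)
    {S : Matrix (Fin 4) (Fin 4) ℝ} (hS : S.IsSymm) :
    Amat (pose R t * S * (pose R t)ᵀ) = R * Amat S * Rᵀ := by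
  rw [Amat, Amat, Pblk_pose_mul_mul_transpose R t S hS, vblk_pose_mul_mul_transpose,
    Nent_pose_mul_mul_transpose]
  by_cases hN : Nent S = 0
  · simp [hN]
  ext i j
  simp only [Matrix.sub_apply, Matrix.add_apply, Matrix.smul_apply, Pi.add_apply, Pi.smul_apply,
    vecMulVec_apply, mul_apply, transpose_apply, mulVec, dotProduct, smul_eq_mul,
    Fin.sum_univ_three]
  field_simp
  ring

lemma charpoly_mul_mul_transpose {n α : Type*} [Fintype n] [DecidableEq n] [CommRing α]
    {Q : Matrix n n α} (hQ : Qᵀ * Q = 1) (A : Matrix n n α) :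
    (Q * A * Qᵀ).charpoly = A.charpoly := by
  rw [charpoly_mul_comm, ← Matrix.mul_assoc, hQ, Matrix.one_mul]

lemma eigDesc_eq_of_charpoly_eq {A B : Matrix (Fin 3) (Fin 3) ℝ} (hA : A.IsHermitian)
    (hB : B.IsHermitian) (h : A.charpoly = B.charpoly) : eigDesc hA = eigDesc hB := by
  funext l
  simp only [eigDesc, (hA.eigenvalues_eq_eigenvalues_iff hB).2 h]

lemma isSymm_sum_mul_mul_transpose {ι n α : Type*} [Fintype ι] [Fintype n] [CommSemiring α]
    (T C : ι → Matrix n n α) (hC : ∀ j, (C j).IsSymm) :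
    (∑ j, T j * C j * (T j)ᵀ).IsSymm := by
  simp only [IsSymm, transpose_sum, transpose_mul, transpose_transpose, (hC _).eq,
    Matrix.mul_assoc]

lemma sum_mul_mul_transpose_mul_left {ι n α : Type*} [Fintype ι] [Fintype n] [CommSemiring α]
    (T₀ : Matrix n n α) (T C : ι → Matrix n n α) :
    ∑ j, (T₀ * T j) * C j * (T₀ * T j)ᵀ = T₀ * (∑ j, T j * C j * (T j)ᵀ) * T₀ᵀ := by
  simp only [Finset.mul_sum, Finset.sum_mul, transpose_mul, Matrix.mul_assoc]

theorem gauge_freedom_general {M : ℕ} (C : Fin M → Matrix (Fin 4) (Fin 4) ℝ)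
    (hC : ∀ j, (C j).IsSymm)
    (R : Fin M → Matrix (Fin 3) (Fin 3) ℝ) (t : Fin M → Fin 3 → ℝ)
    (R₀ : Matrix (Fin 3) (Fin 3) ℝ) (t₀ : Fin 3 → ℝ)
    (hR₀ : R₀ᵀ * R₀ = 1)
    (h₁ : (Amat (∑ j, (pose R₀ t₀ * pose (R j) (t j)) * C j
        * (pose R₀ t₀ * pose (R j) (t j))ᵀ)).IsHermitian)
    (h₂ : (Amat (∑ j, pose (R j) (t j) * C j * (pose (R j) (t j))ᵀ)).IsHermitian) :
    ∀ l : Fin 3, eigDesc h₁ l = eigDesc h₂ l := by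
  have hA : Amat (∑ j, (pose R₀ t₀ * pose (R j) (t j)) * C j
      * (pose R₀ t₀ * pose (R j) (t j))ᵀ)
      = R₀ * Amat (∑ j, pose (R j) (t j) * C j * (pose (R j) (t j))ᵀ) * R₀ᵀ := by
    rw [sum_mul_mul_transpose_mul_left,
      Amat_pose_mul_mul_transpose R₀ t₀ (isSymm_sum_mul_mul_transpose _ C hC)]
  exact congrFun (eigDesc_eq_of_charpoly_eq h₁ h₂ (by rw [hA, charpoly_mul_mul_transpose hR₀]))

/-- Gauge freedom: the BA cost is invariant to left-multiplying all poses by a common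
rigid transform. -/
theorem gauge_freedom {M : ℕ} (C : Fin M → Matrix (Fin 4) (Fin 4) ℝ)
    (hC : ∀ j, (C j).IsSymm)
    (R : Fin M → Matrix (Fin 3) (Fin 3) ℝ) (t : Fin M → Fin 3 → ℝ)
    (hR : ∀ j, (R j)ᵀ * R j = 1) (hdet : ∀ j, (R j).det = 1)
    (hN : 0 < Nent (∑ j, pose (R j) (t j) * C j * (pose (R j) (t j))ᵀ))
    (R₀ : Matrix (Fin 3) (Fin 3) ℝ) (t₀ : Fin 3 → ℝ)
    (hR₀ : R₀ᵀ * R₀ = 1) (hdet₀ : R₀.det = 1)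
    (h₁ : (Amat (∑ j, (pose R₀ t₀ * pose (R j) (t j)) * C j
        * (pose R₀ t₀ * pose (R j) (t j))ᵀ)).IsHermitian)
    (h₂ : (Amat (∑ j, pose (R j) (t j) * C j * (pose (R j) (t j))ᵀ)).IsHermitian) :
    ∀ l : Fin 3, eigDesc h₁ l = eigDesc h₂ l :=
  gauge_freedom_general C hC R t R₀ t₀ hR₀ h₁ h₂

end
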